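/- For all integers i, j ≥ 0 and all signs ε, δ ∈ {1, -1}, the element x_i^ε x_j^δ belongs to G. -/

import Mathlib

set_option maxHeartbeats 1000000

noncomputable section

/-- The unit interval `[0,1]` as a type. -/
abbrev I : Type := Set.Icc (0:ℝ) 1

/-- The underlying function of the generator `x₀` of Thompson's group `F`. -/
def x0fun (t : ℝ) : ℝ := if t ≤ 1/4 then 2*t else if t ≤ 1/2 then t + 1/4 else t/2 + 1/2

/-- The inverse of `x0fun`. -/
def x0inv (t : ℝ) : ℝ := if t ≤ 1/2 then t/2 else if t ≤ 3/4 then t - 1/4 else 2*t - 1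

/-- The underlying function of the generator `x₁` of Thompson's group `F`. -/
def x1fun (t : ℝ) : ℝ :=
  if t ≤ 1/2 then t else if t ≤ 5/8 then 2*t - 1/2 else if t ≤ 3/4 then t + 1/8 else t/2 + 1/2

/-- The inverse of `x1fun`. -/
def x1inv (t : ℝ) : ℝ :=
  if t ≤ 1/2 then t else if t ≤ 3/4 then t/2 + 1/4 else if t ≤ 7/8 then t - 1/8 else 2*t - 1

/-- The generator `x₀` of Thompson's group `F`, as a bijection of `[0,1]`. -/
def x₀ : Equiv.Perm I where
  toFun t := ⟨x0fun t.1, by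
    obtain ⟨h0, h1⟩ := Set.mem_Icc.mp t.2
    simp only [Set.mem_Icc, x0fun]
    split_ifs <;> constructor <;> linarith⟩
  invFun t := ⟨x0inv t.1, by
    obtain ⟨h0, h1⟩ := Set.mem_Icc.mp t.2
    simp only [Set.mem_Icc, x0inv]
    split_ifs <;> constructor <;> linarith⟩
  left_inv t := by
    obtain ⟨h0, h1⟩ := Set.mem_Icc.mp t.2
    apply Subtype.ext
    show x0inv (x0fun t.1) = t.1
    simp only [x0fun, x0inv]
    split_ifs <;> linarith
  right_inv t := by
    obtain ⟨h0, h1⟩ := Set.mem_Icc.mp t.2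
    apply Subtype.ext
    show x0fun (x0inv t.1) = t.1
    simp only [x0fun, x0inv]
    split_ifs <;> linarith

/-- The generator `x₁` of Thompson's group `F`, as a bijection of `[0,1]`. -/
def x₁ : Equiv.Perm I where
  toFun t := ⟨x1fun t.1, by
    obtain ⟨h0, h1⟩ := Set.mem_Icc.mp t.2
    simp only [Set.mem_Icc, x1fun]
    split_ifs <;> constructor <;> linarith⟩
  invFun t := ⟨x1inv t.1, by
    obtain ⟨h0, h1⟩ := Set.mem_Icc.mp t.2
    simp only [Set.mem_Icc, x1inv]
    split_ifs <;> constructor <;> linarith⟩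
  left_inv t := by
    obtain ⟨h0, h1⟩ := Set.mem_Icc.mp t.2
    apply Subtype.ext
    show x1inv (x1fun t.1) = t.1
    simp only [x1fun, x1inv]
    split_ifs <;> linarith
  right_inv t := by
    obtain ⟨h0, h1⟩ := Set.mem_Icc.mp t.2
    apply Subtype.ext
    show x1fun (x1inv t.1) = t.1
    simp only [x1fun, x1inv]
    split_ifs <;> linarith

/-- Composition in Thompson's group `F` is from left to right: the product `f·g` in the paper
is the function `t ↦ g (f t)`.  In Lean, `Equiv.Perm` multiplication is composition from right
to left: `(f * g) t = f (g t)`.  Hence a paper product `a₁ a₂ ⋯ aₙ` corresponds to the Lean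
product `aₙ * ⋯ * a₂ * a₁`.

`x i` is the standard generator `x_i` of Thompson's group `F`: here `x_0, x_1` are the explicit
piecewise-linear maps, and for `i ≥ 1`, `x_{i+1} = x_0^{-i} x_1 x_0^{i}` (left-to-right
composition), which in Lean's convention is `x₀ ^ i * x₁ * (x₀ ^ i)⁻¹`. -/
def x (i : ℕ) : Equiv.Perm I := if i = 0 then x₀ else x₀ ^ (i-1) * x₁ * (x₀ ^ (i-1))⁻¹

/-- Thompson's group `F`, realized as the group of increasing piecewise-linear homeomorphisms of
`[0,1]` with dyadic breakpoints and slopes powers of 2; it is generated by `x_0` and `x_1`. -/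
def F : Subgroup (Equiv.Perm I) := Subgroup.closure {x 0, x 1}

/-- The subgroup `G = ⟨x_0x_2, x_1x_2⟩` of `F` (products written left-to-right, so
`x_0x_2` is the Lean element `x 2 * x 0`). -/
def G : Subgroup (Equiv.Perm I) := Subgroup.closure {x 2 * x 0, x 2 * x 1}

/-- Jones' subgroup `F⃗ = ⟨x_0x_1, x_1x_2, x_2x_3⟩` of `F` (products written left-to-right). -/
def JonesF : Subgroup (Equiv.Perm I) := Subgroup.closure {x 1 * x 0, x 2 * x 1, x 3 * x 2}

lemma x_mem_F (i : ℕ) : x i ∈ F := by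
  have h0 : x 0 ∈ F := Subgroup.subset_closure (by simp)
  have h1 : x 1 ∈ F := Subgroup.subset_closure (by simp)
  have hx0 : x₀ ∈ F := by simpa [x] using h0
  have hx1 : x₁ ∈ F := by simpa [x] using h1
  rcases Nat.eq_zero_or_pos i with h | h
  · subst h; exact h0
  · have : x i = x₀ ^ (i-1) * x₁ * (x₀ ^ (i-1))⁻¹ := by
      simp [x, Nat.pos_iff_ne_zero.mp h]
    rw [this]
    exact mul_mem (mul_mem (pow_mem hx0 _) hx1) (inv_mem (pow_mem hx0 _))

lemma y0_mem_G : x 2 * x 0 ∈ G := Subgroup.subset_closure (by simp)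

lemma y1_mem_G : x 2 * x 1 ∈ G := Subgroup.subset_closure (by simp)

/-- The length `|w|` of an element of `F`: the minimal `n` such that `w` is a product of `n`
elements of `{x_i^{±1} : i ≥ 0}`.  This equals the length of the normal form of `w`. -/
def len (w : Equiv.Perm I) : ℕ :=
  sInf {n | ∃ l : List (Equiv.Perm I), l.length = n ∧
    (∀ a ∈ l, ∃ i : ℕ, a = x i ∨ a = (x i)⁻¹) ∧ l.prod = w}

/-- The element of `F` given by the positive word `x_{i_1} x_{i_2} ⋯ x_{i_n}` (composition from
left to right), where `l = [i_1, i_2, …, i_n]`.  Since Lean's multiplication of permutations is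
composition from right to left, this is the Lean product of the reversed list of letters. -/
def pp (l : List ℕ) : Equiv.Perm I := ((l.map x).reverse).prod

/-- `l = [i_1, …, i_n]` encodes a *block*: a positive normal form `x_{i_1}⋯x_{i_n}`
(so `i_1 ≤ ⋯ ≤ i_n`) with `i_1 ≠ i_n` and `i_j < i_1 + j` for all `j = 1, …, n`
(here with 0-based indexing: `l[k] < l[0] + k + 1`). -/
def IsBlock (l : List ℕ) : Prop :=
  l ≠ [] ∧ l.Pairwise (· ≤ ·) ∧ l.headI ≠ l.getLastD 0 ∧
    ∀ k < l.length, l.getD k 0 < l.headI + k + 1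

/-- The double coset `F⃗ a F⃗` of Jones' subgroup.  (As a set this does not depend on the
composition convention, since `u, v` range over all of `F⃗`.) -/
def dCoset (a : Equiv.Perm I) : Set (Equiv.Perm I) :=
  {w | ∃ u ∈ JonesF, ∃ v ∈ JonesF, w = v * a * u}

/-- A real number is dyadic if it has the form `a / 2^n` with `a, n` natural numbers. -/
def IsDyadic (α : ℝ) : Prop := ∃ (a : ℕ) (n : ℕ), α = a / 2^n

/-- The subgroup of all permutations fixing every point of `U`. -/
def fixing (U : Set ℝ) : Subgroup (Equiv.Perm I) where
  carrier := {g | ∀ t : I, (t : ℝ) ∈ U → g t = t}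
  one_mem' := fun _ _ => rfl
  mul_mem' := by
    intro a b ha hb t ht
    simp only [Equiv.Perm.mul_apply]
    rw [hb t ht, ha t ht]
  inv_mem' := by
    intro a ha t ht
    conv_lhs => rw [← ha t ht]
    exact Equiv.symm_apply_apply a t

/-- `H_U`: the stabilizer in `F` of the finite set `U ⊂ (0,1)`, i.e. the subgroup of all
elements of `F` fixing every point of `U`. -/
def HU (U : Set ℝ) : Subgroup (Equiv.Perm I) := F ⊓ fixing U

/-!
Checking `x_2 x_1 = x_1 x_3` and `x_3 x_1 = x_1 x_4` on the piecewise-linear maps and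
conjugating by powers of `x_0` gives the relations `x_n⁻¹ x_k x_n = x_{k+1}` (`n < k`) of `F`.
With them, `y_1⁻¹ y_0 = x_2⁻¹ x_0` lies in `G`, hence so do `x_0²` and `x_1²`, and conjugation by
`y_0` sends `x_1` to `x_2` and `x_k` to `x_{k+2}` for `k ≥ 2`; so `x_2²` lies in `G` and,
by induction on `k`, every `x_k` lies in both cosets `x_2⁻¹ G` and `G x_2⁻¹`. Each
`x_i^ε x_j^δ` then factors into elements `x_2 x_k`, `x_k x_2`, `x_2²` and their inverses.
-/

section Pieces

variable {t : ℝ}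

lemma x0fun_of_le_quarter (h : t ≤ 1/4) : x0fun t = 2*t := if_pos h

lemma x0fun_of_quarter_lt_of_le_half (h₁ : 1/4 < t) (h₂ : t ≤ 1/2) : x0fun t = t + 1/4 := by
  rw [x0fun, if_neg h₁.not_ge, if_pos h₂]

lemma x0fun_of_half_lt (h : 1/2 < t) : x0fun t = t/2 + 1/2 := by
  rw [x0fun, if_neg (by linarith), if_neg h.not_ge]

lemma x0inv_of_le_half (h : t ≤ 1/2) : x0inv t = t/2 := if_pos h

lemma x0inv_of_half_lt_of_le_three_quarters (h₁ : 1/2 < t) (h₂ : t ≤ 3/4) :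
    x0inv t = t - 1/4 := by
  rw [x0inv, if_neg h₁.not_ge, if_pos h₂]

lemma x0inv_of_three_quarters_lt (h : 3/4 < t) : x0inv t = 2*t - 1 := by
  rw [x0inv, if_neg (by linarith), if_neg h.not_ge]

lemma x1fun_of_le_half (h : t ≤ 1/2) : x1fun t = t := if_pos h

lemma x1fun_of_half_lt_of_le_five_eighths (h₁ : 1/2 < t) (h₂ : t ≤ 5/8) :
    x1fun t = 2*t - 1/2 := by
  rw [x1fun, if_neg h₁.not_ge, if_pos h₂]

lemma x1fun_of_five_eighths_lt_of_le_three_quarters (h₁ : 5/8 < t) (h₂ : t ≤ 3/4) :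
    x1fun t = t + 1/8 := by
  rw [x1fun, if_neg (by linarith), if_neg h₁.not_ge, if_pos h₂]

lemma x1fun_of_three_quarters_lt (h : 3/4 < t) : x1fun t = t/2 + 1/2 := by
  rw [x1fun, if_neg (by linarith), if_neg (by linarith), if_neg h.not_ge]

end Pieces

/- These identities hold on all of `ℝ`: between consecutive breakpoints below, every
intermediate value stays inside one linear piece. -/

lemma x1fun_x0fun_x1fun_x0inv (t : ℝ) :
    x1fun (x0fun (x1fun (x0inv t))) = x0fun (x0fun (x1fun (x0inv (x0inv (x1fun t))))) := by
  rcases le_or_gt t (1/2) with h₁ | h₁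
  on_goal 2 => rcases le_or_gt t (5/8) with h₂ | h₂
  on_goal 3 => rcases le_or_gt t (3/4) with h₃ | h₃
  on_goal 4 => rcases le_or_gt t (13/16) with h₄ | h₄
  on_goal 5 => rcases le_or_gt t (7/8) with h₅ | h₅
  all_goals
    simp (disch := grind) only [x0fun_of_le_quarter, x0fun_of_quarter_lt_of_le_half,
      x0fun_of_half_lt, x0inv_of_le_half, x0inv_of_half_lt_of_le_three_quarters,
      x0inv_of_three_quarters_lt, x1fun_of_le_half, x1fun_of_half_lt_of_le_five_eighths,
      x1fun_of_five_eighths_lt_of_le_three_quarters, x1fun_of_three_quarters_lt]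
    ring

lemma x1fun_x0fun_x0fun_x1fun_x0inv_x0inv (t : ℝ) :
    x1fun (x0fun (x0fun (x1fun (x0inv (x0inv t))))) =
      x0fun (x0fun (x0fun (x1fun (x0inv (x0inv (x0inv (x1fun t))))))) := by
  rcases le_or_gt t (1/2) with h₁ | h₁
  on_goal 2 => rcases le_or_gt t (5/8) with h₂ | h₂
  on_goal 3 => rcases le_or_gt t (3/4) with h₃ | h₃
  on_goal 4 => rcases le_or_gt t (7/8) with h₄ | h₄
  on_goal 5 => rcases le_or_gt t (29/32) with h₅ | h₅
  on_goal 6 => rcases le_or_gt t (15/16) with h₆ | h₆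
  all_goals
    simp (disch := grind) only [x0fun_of_le_quarter, x0fun_of_quarter_lt_of_le_half,
      x0fun_of_half_lt, x0inv_of_le_half, x0inv_of_half_lt_of_le_three_quarters,
      x0inv_of_three_quarters_lt, x1fun_of_le_half, x1fun_of_half_lt_of_le_five_eighths,
      x1fun_of_five_eighths_lt_of_le_three_quarters, x1fun_of_three_quarters_lt]
    ring

lemma x_zero : x 0 = x₀ := rfl

lemma x_one : x 1 = x₁ := rfl

lemma x_succ (m : ℕ) : x (m+1) = x₀ ^ m * x₁ * (x₀ ^ m)⁻¹ := by
  simp [x]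

lemma x_succ_succ (m : ℕ) : x (m+2) = x₀ * x (m+1) * x₀⁻¹ := by
  rw [x_succ, x_succ, pow_succ']
  group

lemma x_one_mul_x_two : x 1 * x 2 = x 3 * x 1 := by
  refine Equiv.ext fun t => Subtype.ext ?_
  simp only [x_succ_succ, x_one, Equiv.Perm.mul_apply]
  exact x1fun_x0fun_x1fun_x0inv t

lemma x_one_mul_x_three : x 1 * x 3 = x 4 * x 1 := by
  refine Equiv.ext fun t => Subtype.ext ?_
  simp only [x_succ_succ, x_one, Equiv.Perm.mul_apply]
  exact x1fun_x0fun_x0fun_x1fun_x0inv_x0inv t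

lemma x_succ_succ_mul_x_succ_succ {a b c d : ℕ} (h : x (a+1) * x (b+1) = x (c+1) * x (d+1)) :
    x (a+2) * x (b+2) = x (c+2) * x (d+2) := by
  rw [x_succ_succ, x_succ_succ, x_succ_succ, x_succ_succ, conj_mul, conj_mul, h]

lemma x_zero_mul_x_succ (m : ℕ) : x 0 * x (m+1) = x (m+2) * x 0 := by
  rw [x_succ_succ, x_zero]
  group

/- Shifting the relation for `k` twice gives `x 3 * x (k+4) = x (k+5) * x 3`, which becomes the
relation for `k + 2` once `x 1 * x 2 = x 3 * x 1` moves `x 1` past `x 2` and back. -/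
theorem x_one_mul_x_add_two : ∀ m : ℕ, x 1 * x (m+2) = x (m+3) * x 1
  | 0 => x_one_mul_x_two
  | 1 => x_one_mul_x_three
  | k+2 => by
    have h₂ : x 2 * x (k+3) = x (k+4) * x 2 :=
      x_succ_succ_mul_x_succ_succ (x_one_mul_x_add_two k)
    have h₃ : x 3 * x (k+4) = x (k+5) * x 3 := x_succ_succ_mul_x_succ_succ h₂
    refine mul_right_cancel (b := x 2) ?_
    calc x 1 * x (k+4) * x 2
        = x 1 * x 2 * x (k+3) := by rw [mul_assoc, ← h₂, mul_assoc]
      _ = x 3 * (x 1 * x (k+3)) := by rw [x_one_mul_x_two, mul_assoc]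
      _ = x 3 * x (k+4) * x 1 := by rw [x_one_mul_x_add_two (k+1), mul_assoc]
      _ = x (k+5) * (x 3 * x 1) := by rw [h₃, mul_assoc]
      _ = x (k+5) * x 1 * x 2 := by rw [← x_one_mul_x_two, mul_assoc]

theorem x_mul_x_of_lt {n k : ℕ} (h : n < k) : x n * x k = x (k+1) * x n := by
  induction n generalizing k with
  | zero =>
    obtain ⟨m, rfl⟩ : ∃ m, k = m + 1 := ⟨k - 1, by omega⟩
    exact x_zero_mul_x_succ m
  | succ n ih =>
    obtain ⟨m, rfl⟩ : ∃ m, k = m + 2 := ⟨k - 2, by omega⟩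
    rcases n with _ | n
    · exact x_one_mul_x_add_two m
    · exact x_succ_succ_mul_x_succ_succ (ih (k := m + 1) (by omega))

lemma x_zero_mul_x_one : x 0 * x 1 = x 2 * x 0 := x_mul_x_of_lt zero_lt_one

lemma x_zero_mul_x_two : x 0 * x 2 = x 3 * x 0 := x_mul_x_of_lt two_pos

lemma x_zero_mul_x_two_inv_mem : x 0 * (x 2)⁻¹ ∈ G := by
  have h : x 0 * (x 2)⁻¹ = (x 2 * x 0) * (x 2 * x 1)⁻¹ := by
    rw [← x_zero_mul_x_one]
    group
  exact h ▸ mul_mem y0_mem_G (inv_mem y1_mem_G)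

lemma x_zero_mul_x_zero_mem : x 0 * x 0 ∈ G := by
  have h : x 0 * x 0 = x 0 * (x 2)⁻¹ * (x 2 * x 0) := by group
  exact h ▸ mul_mem x_zero_mul_x_two_inv_mem y0_mem_G

lemma x_one_mul_x_one_mem : x 1 * x 1 ∈ G := by
  have h₀₂ : x 0 * x 2 * (x 0)⁻¹ = x 3 := by rw [x_zero_mul_x_two]; group
  have h : x 1 * x 1 = x 0 * (x 2)⁻¹ * (x 2 * x 0)⁻¹ * (x 2 * x 1) * (x 2 * x 1) := by
    calc x 1 * x 1 = (x 3)⁻¹ * (x 1 * x 2) * x 1 := by rw [x_one_mul_x_two]; group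
      _ = (x 0 * x 2 * (x 0)⁻¹)⁻¹ * (x 1 * x 2) * x 1 := by rw [h₀₂]
      _ = _ := by group
  exact h ▸ mul_mem (mul_mem (mul_mem x_zero_mul_x_two_inv_mem (inv_mem y0_mem_G)) y1_mem_G)
    y1_mem_G

lemma conj_y₀_x_one : (x 2 * x 0) * x 1 * (x 2 * x 0)⁻¹ = x 2 := by
  calc (x 2 * x 0) * x 1 * (x 2 * x 0)⁻¹ = x 2 * (x 0 * x 1) * (x 0)⁻¹ * (x 2)⁻¹ := by group
    _ = x 2 := by rw [x_zero_mul_x_one]; group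

lemma conj_y₀_x_of_two_le {k : ℕ} (hk : 2 ≤ k) :
    (x 2 * x 0) * x k * (x 2 * x 0)⁻¹ = x (k+2) := by
  calc (x 2 * x 0) * x k * (x 2 * x 0)⁻¹ = x 2 * (x 0 * x k * (x 0)⁻¹) * (x 2)⁻¹ := by group
    _ = x 2 * x (k+1) * (x 2)⁻¹ := by rw [x_mul_x_of_lt (by omega : 0 < k)]; group
    _ = x (k+2) := by rw [x_mul_x_of_lt (by omega : 2 < k + 1)]; group

lemma x_two_mul_x_two_mem : x 2 * x 2 ∈ G := by
  have h : x 2 * x 2 = (x 2 * x 0) * (x 1 * x 1) * (x 2 * x 0)⁻¹ := by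
    rw [← conj_mul, conj_y₀_x_one]
  exact h ▸ mul_mem (mul_mem y0_mem_G x_one_mul_x_one_mem) (inv_mem y0_mem_G)

lemma mul_x_two_mem_iff_of_le_two {g : Equiv.Perm I} {j : ℕ} (hj : j ≤ 2) :
    g * x 2 ∈ G ↔ g * x j ∈ G := by
  have hx : x 2 * x j ∈ G := by
    interval_cases j
    exacts [y0_mem_G, y1_mem_G, x_two_mul_x_two_mem]
  have h : g * x 2 = g * x j * (x 2 * x j)⁻¹ * (x 2 * x 2) := by group
  rw [h, G.mul_mem_cancel_right x_two_mul_x_two_mem, G.mul_mem_cancel_right (inv_mem hx)]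

theorem x_mul_x_two_mem : ∀ k : ℕ, x k * x 2 ∈ G
  | 0 => (mul_x_two_mem_iff_of_le_two (by norm_num)).2 x_zero_mul_x_zero_mem
  | 1 => (mul_x_two_mem_iff_of_le_two (by norm_num)).2 x_one_mul_x_one_mem
  | 2 => x_two_mul_x_two_mem
  | 3 => by
    rw [mul_x_two_mem_iff_of_le_two (j := 1) (by norm_num), ← x_one_mul_x_two]
    exact x_mul_x_two_mem 1
  | k+4 => by
    have h : x (k+4) * x 2 = (x 2 * x 0) * (x (k+2) * x 1) * (x 2 * x 0)⁻¹ := by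
      rw [← conj_mul, conj_y₀_x_of_two_le (by omega), conj_y₀_x_one]
    rw [h]
    refine mul_mem (mul_mem y0_mem_G ?_) (inv_mem y0_mem_G)
    exact (mul_x_two_mem_iff_of_le_two (by norm_num)).1 (x_mul_x_two_mem (k+2))

theorem x_two_mul_x_mem : ∀ k : ℕ, x 2 * x k ∈ G
  | 0 => y0_mem_G
  | 1 => y1_mem_G
  | 2 => x_two_mul_x_two_mem
  | k+3 => x_mul_x_of_lt (by omega : 2 < k + 3) ▸ x_mul_x_two_mem (k+4)

theorem zpow_mul_zpow_mem_of_mul_mem {M : Type*} [Group M] {H : Subgroup M} {c s t : M}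
    (hcc : c * c ∈ H) (hcs : c * s ∈ H) (hsc : s * c ∈ H) (hct : c * t ∈ H) (htc : t * c ∈ H)
    {ε δ : ℤ} (hε : ε = 1 ∨ ε = -1) (hδ : δ = 1 ∨ δ = -1) : t ^ δ * s ^ ε ∈ H := by
  have hts : t * s ∈ H := by
    simpa [mul_assoc] using mul_mem (mul_mem htc (inv_mem hcc)) hcs
  have hst : s * t ∈ H := by
    simpa [mul_assoc] using mul_mem (mul_mem hsc (inv_mem hcc)) hct
  rcases hε with rfl | rfl <;> rcases hδ with rfl | rfl <;> simp only [zpow_one, zpow_neg_one]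
  · exact hts
  · simpa [mul_assoc] using mul_mem (inv_mem hct) hcs
  · simpa [mul_assoc] using mul_mem htc (inv_mem hsc)
  · simpa [mul_inv_rev] using inv_mem hst

/-- For all `i, j ≥ 0` and signs `ε, δ ∈ {1, -1}`, the element `x_i^ε x_j^δ`
belongs to `G`.  (The paper product `x_i^ε x_j^δ`, with composition left-to-right, is the Lean
element `x j ^ δ * x i ^ ε`.) -/
theorem stmt2 (i j : ℕ) (ε δ : ℤ) (hε : ε = 1 ∨ ε = -1) (hδ : δ = 1 ∨ δ = -1) :
    x j ^ δ * x i ^ ε ∈ G :=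
  zpow_mul_zpow_mem_of_mul_mem x_two_mul_x_two_mem (x_two_mul_x_mem i) (x_mul_x_two_mem i)
    (x_two_mul_x_mem j) (x_mul_x_two_mem j) hε hδ
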